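/- arXiv:1808.06556 — 3 statements merged into one kernel-verified Lean document; each statement's English description precedes it below -/
import Mathlib

section
/- Let E be a finite-dimensional real inner product space, ς > 0, and let f : E → ℝ be continuous and ς-strongly convex on E (i.e., f(t·x + (1−t)·y) ≤ t·f(x) + (1−t)·f(y) − (ς/2)·t·(1−t)·‖x − y‖² for all x, y ∈ E and t ∈ [0,1]). Then for every y ∈ E the function x ↦ ⟪y, x⟫ − f(x) attains its supremum at a unique point x(y) ∈ E (so the Fenchel conjugate f*(y) is finite), and for all y₁, y₂ ∈ E one has ‖x(y₁) − x(y₂)‖ ≤ (1/ς)·‖y₁ − y₂‖. -/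
open scoped InnerProductSpace

lemma key_strong_aux {E : Type*} [NormedAddCommGroup E] [InnerProductSpace ℝ E]
    (ς : ℝ) (hς : 0 < ς) (f : E → ℝ)
    (hsc : ∀ x y : E, ∀ t : ℝ, t ∈ Set.Icc (0 : ℝ) 1 →
      f (t • x + (1 - t) • y) ≤
        t * f x + (1 - t) * f y - ς / 2 * t * (1 - t) * ‖x - y‖ ^ 2)
    (y x : E) (hmax : ∀ z : E, ⟪y, z⟫_ℝ - f z ≤ ⟪y, x⟫_ℝ - f x) (z : E) :
    ς / 2 * ‖x - z‖ ^ 2 ≤ (⟪y, x⟫_ℝ - f x) - (⟪y, z⟫_ℝ - f z) := by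
  have hD : 0 ≤ (⟪y, x⟫_ℝ - f x) - (⟪y, z⟫_ℝ - f z) := by linarith [hmax z]
  rcases eq_or_ne (‖x - z‖) 0 with h0 | h0
  · rw [h0]; simpa using hD
  have hN : 0 < ς / 2 * ‖x - z‖ ^ 2 := by
    have : 0 < ‖x - z‖ := lt_of_le_of_ne (norm_nonneg _) (Ne.symm h0)
    positivity
  refine le_of_forall_pos_le_add fun ε hε => ?_
  set N := ς / 2 * ‖x - z‖ ^ 2 with hNdef
  set D := (⟪y, x⟫_ℝ - f x) - (⟪y, z⟫_ℝ - f z) with hDdef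
  set t : ℝ := 1 - min 1 (ε / N) with ht
  clear_value N D t
  have hminpos : 0 < min 1 (ε / N) := lt_min one_pos (div_pos hε hN)
  have hmin1 : min 1 (ε / N) ≤ 1 := min_le_left _ _
  have ht1 : 0 < 1 - t := by rw [ht]; linarith
  have htmem : t ∈ Set.Icc (0:ℝ) 1 := by
    constructor
    · rw [ht]; linarith
    · rw [ht]; linarith
  have h1 := hsc x z t htmem
  have h2 := hmax (t • x + (1 - t) • z)
  rw [inner_add_right, real_inner_smul_right, real_inner_smul_right] at h2
  have h3 : (1 - t) * (t * N) ≤ (1 - t) * D := by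
    rw [hNdef, hDdef]; nlinarith [h1, h2]
  have h4 : t * N ≤ D := le_of_mul_le_mul_left h3 ht1
  have h5 : (1 - t) * N ≤ ε := by
    have heq : 1 - t = min 1 (ε / N) := by rw [ht]; ring
    have hle : 1 - t ≤ ε / N := by rw [heq]; exact min_le_right _ _
    calc (1 - t) * N ≤ (ε / N) * N := mul_le_mul_of_nonneg_right hle hN.le
    _ = ε := div_mul_cancel₀ _ (ne_of_gt hN)
  have h6 : t * N + (1 - t) * N = N := by ring
  linarith

lemma exists_max_aux {E : Type*} [NormedAddCommGroup E] [InnerProductSpace ℝ E]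
    [FiniteDimensional ℝ E]
    (ς : ℝ) (hς : 0 < ς) (f : E → ℝ) (hcont : Continuous f)
    (hsc : ∀ x y : E, ∀ t : ℝ, t ∈ Set.Icc (0 : ℝ) 1 →
      f (t • x + (1 - t) • y) ≤
        t * f x + (1 - t) * f y - ς / 2 * t * (1 - t) * ‖x - y‖ ^ 2)
    (y : E) : ∃ x : E, ∀ z : E, ⟪y, z⟫_ℝ - f z ≤ ⟪y, x⟫_ℝ - f x := by
  set g : E → ℝ := fun x => ⟪y, x⟫_ℝ - f x with hg
  have hgc : Continuous g := (continuous_const.inner continuous_id).sub hcont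
  -- minimum of f on the closed unit ball
  obtain ⟨z₀, hz₀mem, hz₀⟩ := (isCompact_closedBall (0:E) 1).exists_isMinOn
    ⟨0, by simp⟩ hcont.continuousOn
  set m := f z₀ with hm
  set C : ℝ := ‖y‖ + |m| + |f 0| + ς / 2 with hC
  have hC0 : 0 ≤ C := by positivity
  -- coercivity bound
  have hbound : ∀ x : E, 1 ≤ ‖x‖ → g x ≤ C * ‖x‖ + |f 0| - ς / 2 * ‖x‖ ^ 2 := by
    intro x hx
    have hn0 : (0:ℝ) < ‖x‖ := by linarith
    set n := ‖x‖ with hn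
    set t : ℝ := 1 / n with htdef
    have ht0 : 0 < t := by positivity
    have ht1 : t ≤ 1 := by rw [htdef]; rw [div_le_one hn0]; exact hx
    have htn : t * n = 1 := by rw [htdef]; field_simp
    have hsc' := hsc x 0 t ⟨ht0.le, ht1⟩
    simp only [smul_zero, add_zero, sub_zero] at hsc'
    have htx : t • x ∈ Metric.closedBall (0:E) 1 := by
      simp only [Metric.mem_closedBall, dist_zero_right, norm_smul, Real.norm_eq_abs,
        abs_of_pos ht0]
      rw [← hn, htn]
    have hmle : m ≤ f (t • x) := hz₀ htx
    have hkey : m ≤ t * f x + (1 - t) * f 0 - ς / 2 * t * (1 - t) * n ^ 2 := by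
      rw [hn]; linarith
    -- multiply by n
    have hkey2 : m * n ≤ f x + (n - 1) * f 0 - ς / 2 * (n ^ 2 - n) := by
      have h := mul_le_mul_of_nonneg_right hkey hn0.le
      have e2 : t * f x * n = f x := by
        rw [show t * f x * n = (t * n) * f x from by ring, htn, one_mul]
      have e3 : t * f 0 * n = f 0 := by
        rw [show t * f 0 * n = (t * n) * f 0 from by ring, htn, one_mul]
      have e4 : t * n ^ 3 = n ^ 2 := by
        rw [show t * n ^ 3 = (t * n) * n ^ 2 from by ring, htn, one_mul]
      have e5 : t ^ 2 * n ^ 3 = n := by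
        rw [show t ^ 2 * n ^ 3 = (t * n) * ((t * n) * n) from by ring, htn]; ring
      nlinarith [h, e2, e3, e4, e5]
    have hinner : ⟪y, x⟫_ℝ ≤ ‖y‖ * ‖x‖ := real_inner_le_norm y x
    rw [← hn] at hinner
    have habs1 : -|m| ≤ m := neg_abs_le m
    have habs2 : f 0 ≤ |f 0| := le_abs_self _
    simp only [hg, hC]
    have hn1 : (0:ℝ) ≤ n - 1 := by linarith
    nlinarith [hkey2, hinner, mul_le_mul_of_nonneg_right habs1 hn0.le,
      mul_le_mul_of_nonneg_left habs2 hn1, hx, abs_nonneg (f 0)]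
  set R : ℝ := max 1 (2 / ς * (C + 2 * |f 0| + 1)) with hR
  have hR1 : 1 ≤ R := le_max_left _ _
  clear_value g m C R
  have hfar : ∀ x : E, R < ‖x‖ → g x < g 0 := by
    intro x hxR
    have hx1 : 1 ≤ ‖x‖ := le_trans hR1 hxR.le
    have hx2 : 2 / ς * (C + 2 * |f 0| + 1) < ‖x‖ := by
      rw [hR] at hxR; exact lt_of_le_of_lt (le_max_right _ _) hxR
    have hb := hbound x hx1
    have hg0 : g 0 = - f 0 := by simp [hg]
    have hq : C + 2 * |f 0| + 1 ≤ ς / 2 * ‖x‖ := by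
      have h1 := mul_lt_mul_of_pos_left hx2 (by positivity : (0:ℝ) < ς / 2)
      have h2 : ς / 2 * (2 / ς * (C + 2 * |f 0| + 1)) = C + 2 * |f 0| + 1 := by
        field_simp
      linarith
    have habs3 : -|f 0| ≤ f 0 := neg_abs_le _
    rw [hg0]
    nlinarith [hb, mul_le_mul_of_nonneg_right hq (norm_nonneg x), hx1,
      abs_nonneg (f 0), le_abs_self (f 0),
      mul_le_mul_of_nonneg_left hx1 (by positivity : (0:ℝ) ≤ 2 * |f 0| + 1)]
  have h0mem : (0:E) ∈ Metric.closedBall (0:E) R := by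
    simp only [Metric.mem_closedBall, dist_self]; linarith
  obtain ⟨x₀, hx₀mem, hx₀⟩ := (isCompact_closedBall (0:E) R).exists_isMaxOn
    ⟨0, h0mem⟩ hgc.continuousOn
  refine ⟨x₀, fun z => ?_⟩
  have hgoal : g z ≤ g x₀ := by
    by_cases hz : z ∈ Metric.closedBall (0:E) R
    · exact hx₀ hz
    · have hzn : R < ‖z‖ := by
        simpa [Metric.mem_closedBall, dist_zero_right] using hz
      exact le_trans (hfar z hzn).le (hx₀ h0mem)
  simpa [hg] using hgoal

/-- If `f` is continuous and `ς`-strongly convex on a finite-dimensional real inner product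
space, then for every `y` the function `x ↦ ⟪y, x⟫ - f x` attains its supremum at a unique
point, and the resulting maximizer map is `(1/ς)`-Lipschitz (i.e. the conjugate `f*` is
`(1/ς)`-smooth). -/
theorem conjugate_of_strongly_convex_smooth
    {E : Type*} [NormedAddCommGroup E] [InnerProductSpace ℝ E] [FiniteDimensional ℝ E]
    (ς : ℝ) (hς : 0 < ς) (f : E → ℝ) (hcont : Continuous f)
    (hsc : ∀ x y : E, ∀ t : ℝ, t ∈ Set.Icc (0 : ℝ) 1 →
      f (t • x + (1 - t) • y) ≤
        t * f x + (1 - t) * f y - ς / 2 * t * (1 - t) * ‖x - y‖ ^ 2) :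
    (∀ y : E, ∃! x : E, ∀ z : E, ⟪y, z⟫_ℝ - f z ≤ ⟪y, x⟫_ℝ - f x) ∧
      (∀ y₁ y₂ x₁ x₂ : E,
        (∀ z : E, ⟪y₁, z⟫_ℝ - f z ≤ ⟪y₁, x₁⟫_ℝ - f x₁) →
        (∀ z : E, ⟪y₂, z⟫_ℝ - f z ≤ ⟪y₂, x₂⟫_ℝ - f x₂) →
        ‖x₁ - x₂‖ ≤ (1 / ς) * ‖y₁ - y₂‖) := by
  constructor
  · intro y
    obtain ⟨x₀, hx₀⟩ := exists_max_aux ς hς f hcont hsc y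
    refine ⟨x₀, hx₀, fun x' hx' => ?_⟩
    have k := key_strong_aux ς hς f hsc y x' hx' x₀
    have hle : (⟪y, x'⟫_ℝ - f x') - (⟪y, x₀⟫_ℝ - f x₀) ≤ 0 := by linarith [hx₀ x']
    have hz : ‖x' - x₀‖ = 0 := by
      by_contra hne
      have hp : 0 < ‖x' - x₀‖ := lt_of_le_of_ne (norm_nonneg _) (Ne.symm hne)
      nlinarith [mul_pos hς (mul_pos hp hp)]
    exact sub_eq_zero.mp (norm_eq_zero.mp hz)
  · intro y₁ y₂ x₁ x₂ h₁ h₂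
    have k1 := key_strong_aux ς hς f hsc y₁ x₁ h₁ x₂
    have k2 := key_strong_aux ς hς f hsc y₂ x₂ h₂ x₁
    rw [show ‖x₂ - x₁‖ = ‖x₁ - x₂‖ from norm_sub_rev _ _] at k2
    have hsum : ς * ‖x₁ - x₂‖ ^ 2 ≤ ⟪y₁ - y₂, x₁ - x₂⟫_ℝ := by
      have he : ⟪y₁ - y₂, x₁ - x₂⟫_ℝ =
          ⟪y₁, x₁⟫_ℝ - ⟪y₁, x₂⟫_ℝ - ⟪y₂, x₁⟫_ℝ + ⟪y₂, x₂⟫_ℝ := by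
        simp [inner_sub_left, inner_sub_right]; ring
      rw [he]; linarith
    have hcs : ⟪y₁ - y₂, x₁ - x₂⟫_ℝ ≤ ‖y₁ - y₂‖ * ‖x₁ - x₂‖ := real_inner_le_norm _ _
    rcases eq_or_lt_of_le (norm_nonneg (x₁ - x₂)) with h0 | h0
    · rw [← h0]; positivity
    · have h6 : ς * ‖x₁ - x₂‖ ≤ ‖y₁ - y₂‖ := by nlinarith
      calc ‖x₁ - x₂‖ = 1 / ς * (ς * ‖x₁ - x₂‖) := by field_simp
        _ ≤ 1 / ς * ‖y₁ - y₂‖ := by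
            exact mul_le_mul_of_nonneg_left h6 (by positivity)
end

section
/- Let E be a finite-dimensional real inner product space, ρ > 0, and u, w ∈ E. Consider G : E → ℝ defined by G(z) = ‖z‖ − ⟪u, z⟫ + (ρ/2)·‖w − z‖². If ‖ρ·w + u‖ ≤ 1, then z = 0 is the unique minimizer of G over E. If ‖ρ·w + u‖ > 1, then the unique minimizer of G over E is z = (1 − 1/‖ρ·w + u‖) • (w + ρ⁻¹ • u). -/
/-!
Completing the square with `v = ρ • w + u` turns the objective into
`f z = ‖z‖ - ⟪v, z⟫ + ρ/2 ‖z‖²` plus a constant. Against `z⋆ = (1 - 1/‖v‖) • ρ⁻¹ • v` (for `‖v‖ ≥ 1`)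
`f` satisfies the exact identity
`f z - f z⋆ = ρ/2 ‖z - z⋆‖² + (‖v‖ ‖z‖ - ⟪v, z⟫) / ‖v‖`,
whose second term is nonnegative by Cauchy–Schwarz; for `‖v‖ ≤ 1` the analogue against `0` is
`f z = ρ/2 ‖z‖² + (‖z‖ - ⟪v, z⟫)` with `⟪v, z⟫ ≤ ‖v‖ ‖z‖ ≤ ‖z‖`.
-/

open scoped InnerProductSpace

namespace AdmmZUpdate

variable {E : Type*} [NormedAddCommGroup E] [InnerProductSpace ℝ E]

noncomputable def shrinkObjective (v : E) (ρ : ℝ) (z : E) : ℝ :=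
  ‖z‖ - ⟪v, z⟫_ℝ + ρ / 2 * ‖z‖ ^ 2

theorem norm_sub_inner_add_mul_norm_sub_sq (ρ : ℝ) (u w z : E) :
    ‖z‖ - ⟪u, z⟫_ℝ + ρ / 2 * ‖w - z‖ ^ 2
      = shrinkObjective (ρ • w + u) ρ z + ρ / 2 * ‖w‖ ^ 2 := by
  rw [shrinkObjective, norm_sub_sq_real, inner_add_left, real_inner_smul_left]
  ring

@[simp]
theorem shrinkObjective_zero (v : E) (ρ : ℝ) : shrinkObjective v ρ 0 = 0 := by
  simp [shrinkObjective]

theorem shrinkObjective_pos {v z : E} {ρ : ℝ} (hv : ‖v‖ ≤ 1) (hρ : 0 < ρ) (hz : z ≠ 0) :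
    0 < shrinkObjective v ρ z := by
  have hcs : ⟪v, z⟫_ℝ ≤ ‖z‖ :=
    (real_inner_le_norm v z).trans (mul_le_of_le_one_left (norm_nonneg z) hv)
  have hsq : 0 < ρ / 2 * ‖z‖ ^ 2 := by positivity
  unfold shrinkObjective
  linarith

theorem shrinkObjective_sub_shrinkObjective_eq {v : E} {ρ : ℝ} (hv : 1 ≤ ‖v‖) (hρ : 0 < ρ)
    (z : E) :
    shrinkObjective v ρ z - shrinkObjective v ρ ((1 - 1 / ‖v‖) • ρ⁻¹ • v)
      = ρ / 2 * ‖z - (1 - 1 / ‖v‖) • ρ⁻¹ • v‖ ^ 2 + (‖v‖ * ‖z‖ - ⟪v, z⟫_ℝ) / ‖v‖ := by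
  set s := ‖v‖ with hs
  have hs0 : 0 < s := by linarith
  rw [smul_smul]
  set c := (1 - 1 / s) * ρ⁻¹ with hc
  have hc0 : 0 ≤ c := mul_nonneg (by rw [sub_nonneg, div_le_one hs0]; exact hv) (by positivity)
  have hnorm : ‖c • v‖ = c * s := by rw [norm_smul, Real.norm_of_nonneg hc0]
  have hinner : ⟪v, c • v⟫_ℝ = c * s ^ 2 := by
    rw [real_inner_smul_right, real_inner_self_eq_norm_sq]
  have hdist : ‖z - c • v‖ ^ 2 = ‖z‖ ^ 2 - 2 * c * ⟪v, z⟫_ℝ + c ^ 2 * s ^ 2 := by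
    rw [norm_sub_sq_real, real_inner_smul_right, real_inner_comm, hnorm]
    ring
  rw [shrinkObjective, shrinkObjective, hnorm, hinner, hdist, hc]
  field_simp
  ring

theorem shrinkObjective_lt {v z : E} {ρ : ℝ} (hv : 1 ≤ ‖v‖) (hρ : 0 < ρ)
    (hz : z ≠ (1 - 1 / ‖v‖) • ρ⁻¹ • v) :
    shrinkObjective v ρ ((1 - 1 / ‖v‖) • ρ⁻¹ • v) < shrinkObjective v ρ z := by
  have hdist : 0 < ρ / 2 * ‖z - (1 - 1 / ‖v‖) • ρ⁻¹ • v‖ ^ 2 := by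
    have : z - (1 - 1 / ‖v‖) • ρ⁻¹ • v ≠ 0 := sub_ne_zero.mpr hz
    positivity
  have hcs : 0 ≤ (‖v‖ * ‖z‖ - ⟪v, z⟫_ℝ) / ‖v‖ :=
    div_nonneg (sub_nonneg.mpr (real_inner_le_norm v z)) (norm_nonneg v)
  linarith [shrinkObjective_sub_shrinkObjective_eq hv hρ z]

end AdmmZUpdate

open AdmmZUpdate

theorem admm_z_update_closed_form_general
    {E : Type*} [NormedAddCommGroup E] [InnerProductSpace ℝ E]
    (ρ : ℝ) (hρ : 0 < ρ) (u w : E) (G : E → ℝ)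
    (hG : ∀ z : E, G z = ‖z‖ - ⟪u, z⟫_ℝ + ρ / 2 * ‖w - z‖ ^ 2) :
    (‖ρ • w + u‖ ≤ 1 → ∀ z : E, z ≠ 0 → G 0 < G z) ∧
      (1 < ‖ρ • w + u‖ →
        ∀ z : E, z ≠ (1 - 1 / ‖ρ • w + u‖) • (w + ρ⁻¹ • u) →
          G ((1 - 1 / ‖ρ • w + u‖) • (w + ρ⁻¹ • u)) < G z) := by
  have hG' : ∀ z, G z = shrinkObjective (ρ • w + u) ρ z + ρ / 2 * ‖w‖ ^ 2 := fun z => by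
    rw [hG, norm_sub_inner_add_mul_norm_sub_sq]
  have hshift : w + ρ⁻¹ • u = ρ⁻¹ • (ρ • w + u) := by
    rw [smul_add, inv_smul_smul₀ hρ.ne']
  refine ⟨fun hv z hz => ?_, fun hv z hz => ?_⟩
  · rw [hG', hG', shrinkObjective_zero]
    linarith [shrinkObjective_pos hv hρ hz]
  · rw [hshift] at hz ⊢
    rw [hG', hG']
    linarith [shrinkObjective_lt hv.le hρ hz]

/-- Closed form of one row of the Z-update in the ADMM method for triangle lasso:
for `G z = ‖z‖ - ⟪u, z⟫ + (ρ/2) ‖w - z‖²`, if `‖ρ • w + u‖ ≤ 1` then `0` is the unique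
minimizer of `G`, and if `‖ρ • w + u‖ > 1` then `(1 - 1/‖ρ • w + u‖) • (w + ρ⁻¹ • u)`
is the unique minimizer of `G`. -/
theorem admm_z_update_closed_form
    {E : Type*} [NormedAddCommGroup E] [InnerProductSpace ℝ E] [FiniteDimensional ℝ E]
    (ρ : ℝ) (hρ : 0 < ρ) (u w : E) (G : E → ℝ)
    (hG : ∀ z : E, G z = ‖z‖ - ⟪u, z⟫_ℝ + ρ / 2 * ‖w - z‖ ^ 2) :
    (‖ρ • w + u‖ ≤ 1 → ∀ z : E, z ≠ 0 → G 0 < G z) ∧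
      (1 < ‖ρ • w + u‖ →
        ∀ z : E, z ≠ (1 - 1 / ‖ρ • w + u‖) • (w + ρ⁻¹ • u) →
          G ((1 - 1 / ‖ρ • w + u‖) • (w + ρ⁻¹ • u)) < G z) :=
  admm_z_update_closed_form_general ρ hρ u w G hG
end

section
/- Let E be a finite-dimensional real inner product space, Q : Matrix (Fin m) (Fin n) ℝ, and let f : (Fin n → E) → ℝ be convex. For X : Fin n → E write (QX)_i = Σ_j Q i j • X_j. Suppose λ : Fin m → E satisfies ‖λ_i‖ ≤ 1 for all i, and X* : Fin n → E satisfies: (i) X* minimizes the Lagrangian X ↦ f(X) + Σ_i ⟪λ_i, (QX)_i⟫ over all X; and (ii) ⟪λ_i, (QX*)_i⟫ = ‖(QX*)_i‖ for every i. Then X* minimizes the triangle lasso objective F(X) = f(X) + Σ_i ‖(QX)_i‖ over all X : Fin n → E. -/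
/-!
By Cauchy–Schwarz, `‖λ i‖ ≤ 1` makes the Lagrangian a minorant of the lasso objective, and
complementarity makes the two agree at `X*`; a minimizer of a minorant that touches the
function there is a minimizer of the function.
-/

open scoped InnerProductSpace

theorem real_inner_le_norm_of_norm_le_one {E : Type*} [NormedAddCommGroup E]
    [InnerProductSpace ℝ E] {u : E} (hu : ‖u‖ ≤ 1) (v : E) : ⟪u, v⟫_ℝ ≤ ‖v‖ :=
  (real_inner_le_norm u v).trans (mul_le_of_le_one_left (norm_nonneg v) hu)

theorem le_of_touching_minorant {α β : Type*} [Preorder β] {φ ψ : α → β} {x : α}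
    (hle : ∀ y, φ y ≤ ψ y) (heq : φ x = ψ x) (hmin : ∀ y, φ x ≤ φ y) (y : α) :
    ψ x ≤ ψ y :=
  heq ▸ (hmin y).trans (hle y)

theorem triangle_lasso_dual_recovery_general
    {E : Type*} [NormedAddCommGroup E] [InnerProductSpace ℝ E]
    {m n : ℕ} (Q : Matrix (Fin m) (Fin n) ℝ) (f : (Fin n → E) → ℝ)
    (lam : Fin m → E) (hlam : ∀ i : Fin m, ‖lam i‖ ≤ 1)
    (Xs : Fin n → E)
    (hmin : ∀ X : Fin n → E,
      f Xs + ∑ i, ⟪lam i, ∑ j, Q i j • Xs j⟫_ℝ ≤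
        f X + ∑ i, ⟪lam i, ∑ j, Q i j • X j⟫_ℝ)
    (hcomp : ∀ i : Fin m, ⟪lam i, ∑ j, Q i j • Xs j⟫_ℝ = ‖∑ j, Q i j • Xs j‖) :
    ∀ X : Fin n → E,
      f Xs + ∑ i, ‖∑ j, Q i j • Xs j‖ ≤ f X + ∑ i, ‖∑ j, Q i j • X j‖ := by
  refine le_of_touching_minorant (φ := fun X ↦ f X + ∑ i, ⟪lam i, ∑ j, Q i j • X j⟫_ℝ)
    (ψ := fun X ↦ f X + ∑ i, ‖∑ j, Q i j • X j‖) (fun X ↦ ?_) ?_ hmin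
  · gcongr with i
    exact real_inner_le_norm_of_norm_le_one (hlam i) _
  · simp only [hcomp]

/-- Sufficiency of Lagrangian optimality plus complementarity for primal optimality in
triangle lasso: if `f` is convex, `λ` is dual feasible (`‖λ i‖ ≤ 1`), `X*` minimizes the
Lagrangian `X ↦ f X + ∑ i ⟪λ i, (QX) i⟫`, and `⟪λ i, (QX*) i⟫ = ‖(QX*) i‖` for every `i`,
then `X*` minimizes the triangle lasso objective `F X = f X + ∑ i ‖(QX) i‖`. -/
theorem triangle_lasso_dual_recovery
    {E : Type*} [NormedAddCommGroup E] [InnerProductSpace ℝ E] [FiniteDimensional ℝ E]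
    {m n : ℕ} (Q : Matrix (Fin m) (Fin n) ℝ) (f : (Fin n → E) → ℝ)
    (hf : ConvexOn ℝ Set.univ f)
    (lam : Fin m → E) (hlam : ∀ i : Fin m, ‖lam i‖ ≤ 1)
    (Xs : Fin n → E)
    (hmin : ∀ X : Fin n → E,
      f Xs + ∑ i, ⟪lam i, ∑ j, Q i j • Xs j⟫_ℝ ≤
        f X + ∑ i, ⟪lam i, ∑ j, Q i j • X j⟫_ℝ)
    (hcomp : ∀ i : Fin m, ⟪lam i, ∑ j, Q i j • Xs j⟫_ℝ = ‖∑ j, Q i j • Xs j‖) :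
    ∀ X : Fin n → E,
      f Xs + ∑ i, ‖∑ j, Q i j • Xs j‖ ≤ f X + ∑ i, ‖∑ j, Q i j • X j‖ :=
  triangle_lasso_dual_recovery_general Q f lam hlam Xs hmin hcomp
end
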